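/- Let D_b ∈ [0,1] be random variables (indexed by b with probabilities p_b) such that Σ_b p_b D_b ≤ √q for some q > 0, and let h be the binary entropy function. Then for any d' ∈ (0, 1/2], Σ_b p_b h(D_b) ≤ √q/d' + h(d'). In particular, choosing d' = (2/3)^{2/3} q^{1/3}, one obtains Σ_b p_b h(D_b) ≤ 3(3/2)^{2/3} q^{1/6} = O(q^{1/6}). -/

import Mathlib

/-!
Split according to whether `D_b ≥ d'`. If so, `h(D_b) ≤ 1 ≤ D_b / d'`, which averages to the
Markov bound `√q / d'`; otherwise `h(D_b) ≤ h(d')` by monotonicity of `h` on `[0, 1/2]`. Hence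
`h(x) ≤ x / d' + h(d')` pointwise, and averaging gives the first claim. For the second, the
entropy bound `h(d') ≤ 3 √d'` (from `-y ln y ≤ 1 - y` at `y = √d'` and `y = 1 - d'`, and
`ln 2 > 2/3`) turns the right-hand side into `√q / d' + 3 √d'`, which the chosen `d'` minimises.
-/

/-- Binary entropy function (base-2 logarithms). -/
noncomputable def binEnt (x : ℝ) : ℝ :=
  -x * Real.logb 2 x - (1 - x) * Real.logb 2 (1 - x)

open Real

lemma binEnt_eq_binEntropy_div_log_two (x : ℝ) : binEnt x = binEntropy x / log 2 := by
  simp only [binEnt, binEntropy, logb, log_inv]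
  ring

lemma binEnt_nonneg {x : ℝ} (h0 : 0 ≤ x) (h1 : x ≤ 1) : 0 ≤ binEnt x := by
  rw [binEnt_eq_binEntropy_div_log_two]
  exact div_nonneg (binEntropy_nonneg h0 h1) (log_nonneg one_le_two)

lemma binEnt_le_one (x : ℝ) : binEnt x ≤ 1 := by
  rw [binEnt_eq_binEntropy_div_log_two, div_le_one (log_pos one_lt_two)]
  exact binEntropy_le_log_two

lemma binEnt_monotoneOn : MonotoneOn binEnt (Set.Icc 0 (1 / 2)) := by
  intro x hx y hy hxy
  simp only [binEnt_eq_binEntropy_div_log_two]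
  gcongr
  exact binEntropy_strictMonoOn.monotoneOn (by simpa using hx) (by simpa using hy) hxy

lemma binEnt_le_div_add_binEnt {x d : ℝ} (hx : 0 ≤ x) (hd0 : 0 < d) (hd : d ≤ 1 / 2) :
    binEnt x ≤ x / d + binEnt d := by
  rcases le_or_gt d x with hdx | hxd
  · have h1 : 1 ≤ x / d := (one_le_div hd0).2 hdx
    linarith [binEnt_le_one x, binEnt_nonneg hd0.le (by linarith : d ≤ 1)]
  · have h2 : binEnt x ≤ binEnt d :=
      binEnt_monotoneOn ⟨hx, by linarith⟩ ⟨hd0.le, hd⟩ hxd.le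
    linarith [div_nonneg hx hd0.le]

lemma sum_mul_binEnt_le {ι : Type*} (s : Finset ι) (p D : ι → ℝ) {m d : ℝ}
    (hp0 : ∀ b ∈ s, 0 ≤ p b) (hp1 : ∑ b ∈ s, p b = 1) (hD0 : ∀ b ∈ s, 0 ≤ D b)
    (hMean : ∑ b ∈ s, p b * D b ≤ m) (hd0 : 0 < d) (hd : d ≤ 1 / 2) :
    ∑ b ∈ s, p b * binEnt (D b) ≤ m / d + binEnt d :=
  calc ∑ b ∈ s, p b * binEnt (D b) ≤ ∑ b ∈ s, p b * (D b / d + binEnt d) :=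
        Finset.sum_le_sum fun b hb =>
          mul_le_mul_of_nonneg_left (binEnt_le_div_add_binEnt (hD0 b hb) hd0 hd) (hp0 b hb)
    _ = (∑ b ∈ s, p b * D b) / d + binEnt d := by
        simp only [mul_add, Finset.sum_add_distrib, ← Finset.sum_mul, hp1, one_mul,
          Finset.sum_div, mul_div_assoc]
    _ ≤ m / d + binEnt d := by gcongr

lemma binEntropy_le_two_mul_sqrt {x : ℝ} (h0 : 0 ≤ x) (h1 : x ≤ 1) :
    binEntropy x ≤ 2 * √x := by
  have hsq : negMulLog x = 2 * √x * negMulLog √x := by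
    rw [← mul_self_sqrt h0, negMulLog_mul, sqrt_mul_self (sqrt_nonneg x)]
    ring
  have hx := negMulLog_le_one_sub_self (sqrt_nonneg x)
  have hx' := negMulLog_le_one_sub_self (sub_nonneg.2 h1)
  rw [binEntropy_eq_negMulLog_add_negMulLog_one_sub, hsq]
  nlinarith [sqrt_nonneg x, mul_self_sqrt h0]

lemma binEnt_le_three_mul_sqrt {x : ℝ} (h0 : 0 ≤ x) (h1 : x ≤ 1) : binEnt x ≤ 3 * √x := by
  have hlog : 2 / 3 < log 2 := lt_trans (by norm_num) log_two_gt_d9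
  rw [binEnt_eq_binEntropy_div_log_two, div_le_iff₀ (log_pos one_lt_two)]
  nlinarith [binEntropy_le_two_mul_sqrt h0 h1, sqrt_nonneg x]

lemma sqrt_div_add_three_mul_sqrt_eq {q : ℝ} (hq : 0 < q) :
    √q / ((2 / 3 : ℝ) ^ ((2 : ℝ) / 3) * q ^ ((1 : ℝ) / 3)) +
        3 * √((2 / 3 : ℝ) ^ ((2 : ℝ) / 3) * q ^ ((1 : ℝ) / 3)) =
      3 * (3 / 2 : ℝ) ^ ((2 : ℝ) / 3) * q ^ ((1 : ℝ) / 6) := by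
  set a : ℝ := (2 / 3 : ℝ) ^ ((1 : ℝ) / 3)
  set s : ℝ := q ^ ((1 : ℝ) / 6)
  have ha : 0 < a := by positivity
  have hs : 0 < s := by positivity
  have ha3 : a ^ 3 = 2 / 3 := by
    rw [← rpow_mul_natCast (by norm_num)]; norm_num
  have ha2 : (2 / 3 : ℝ) ^ ((2 : ℝ) / 3) = a ^ 2 := by
    rw [← rpow_mul_natCast (by norm_num)]; norm_num
  have hinv : (3 / 2 : ℝ) ^ ((2 : ℝ) / 3) = (a ^ 2)⁻¹ := by
    rw [← ha2, ← inv_rpow (by norm_num)]; norm_num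
  have hs2 : q ^ ((1 : ℝ) / 3) = s ^ 2 := by
    rw [← rpow_mul_natCast hq.le]; norm_num
  have hs3 : √q = s ^ 3 := by
    rw [sqrt_eq_rpow, ← rpow_mul_natCast hq.le]; norm_num
  rw [ha2, hinv, hs2, hs3, ← mul_pow, sqrt_sq (by positivity)]
  field_simp
  linear_combination 3 * ha3

theorem avg_binEnt_bound_general {ι : Type*} [Fintype ι] (p D : ι → ℝ) (q : ℝ)
    (hq : 0 < q)
    (hp0 : ∀ b, 0 ≤ p b) (hp1 : ∑ b, p b = 1)
    (hD0 : ∀ b, 0 ≤ D b)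
    (hMean : ∑ b, p b * D b ≤ Real.sqrt q) :
    (∀ d' : ℝ, 0 < d' → d' ≤ 1 / 2 →
        ∑ b, p b * binEnt (D b) ≤ Real.sqrt q / d' + binEnt d') ∧
      (((2 / 3 : ℝ) ^ ((2 : ℝ) / 3) * q ^ ((1 : ℝ) / 3) ≤ 1 / 2) →
        ∑ b, p b * binEnt (D b) ≤ 3 * (3 / 2 : ℝ) ^ ((2 : ℝ) / 3) * q ^ ((1 : ℝ) / 6)) := by
  have hbound : ∀ d' : ℝ, 0 < d' → d' ≤ 1 / 2 →
      ∑ b, p b * binEnt (D b) ≤ Real.sqrt q / d' + binEnt d' := fun d' hd0 hd =>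
    sum_mul_binEnt_le _ p D (fun b _ => hp0 b) hp1 (fun b _ => hD0 b) hMean hd0 hd
  refine ⟨hbound, fun hd => ?_⟩
  set d : ℝ := (2 / 3 : ℝ) ^ ((2 : ℝ) / 3) * q ^ ((1 : ℝ) / 3)
  have hd0 : 0 < d := by positivity
  calc ∑ b, p b * binEnt (D b) ≤ √q / d + binEnt d := hbound d hd0 hd
    _ ≤ √q / d + 3 * √d := by gcongr; exact binEnt_le_three_mul_sqrt hd0.le (by linarith)
    _ = 3 * (3 / 2 : ℝ) ^ ((2 : ℝ) / 3) * q ^ ((1 : ℝ) / 6) :=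
        sqrt_div_add_three_mul_sqrt_eq hq

/-- If `D_b ∈ [0,1]` with probabilities `p_b` satisfy `Σ_b p_b D_b ≤ √q` for `q > 0`, then
for any `d' ∈ (0, 1/2]` we have `Σ_b p_b h(D_b) ≤ √q/d' + h(d')`; and in particular, choosing
`d' = (2/3)^(2/3) q^(1/3)` (assumed admissible, i.e. `≤ 1/2`), one obtains
`Σ_b p_b h(D_b) ≤ 3 (3/2)^(2/3) q^(1/6)`. -/
theorem avg_binEnt_bound {ι : Type*} [Fintype ι] (p D : ι → ℝ) (q : ℝ)
    (hq : 0 < q)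
    (hp0 : ∀ b, 0 ≤ p b) (hp1 : ∑ b, p b = 1)
    (hD0 : ∀ b, 0 ≤ D b) (hD1 : ∀ b, D b ≤ 1)
    (hMean : ∑ b, p b * D b ≤ Real.sqrt q) :
    (∀ d' : ℝ, 0 < d' → d' ≤ 1 / 2 →
        ∑ b, p b * binEnt (D b) ≤ Real.sqrt q / d' + binEnt d') ∧
      (((2 / 3 : ℝ) ^ ((2 : ℝ) / 3) * q ^ ((1 : ℝ) / 3) ≤ 1 / 2) →
        ∑ b, p b * binEnt (D b) ≤ 3 * (3 / 2 : ℝ) ^ ((2 : ℝ) / 3) * q ^ ((1 : ℝ) / 6)) :=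
  avg_binEnt_bound_general p D q hq hp0 hp1 hD0 hMean
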